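/- Let G be a finite simple graph in which every vertex has degree exactly 2, let {u1,v1} and {u2,v2} be edges of G with u1, v1, u2, v2 pairwise distinct and with neither {u1,u2} nor {v1,v2} an edge of G, and let G' be the result of the two-switch on these edges. Suppose u1 and u2 lie in the same connected component of G, and v1 and v2 lie in the same connected component of the induced subgraph of G on V \ {u1, u2}. Then every vertex of G' has degree exactly 2; in G' the vertices u1 and v1 lie in different connected components, with u2 in the component of u1 and v2 in the component of v1; and every vertex of the connected component of u1 in G lies either in the G'-component of u1 or in the G'-component of v1. -/

import Mathlib

/-!
A two-switch preserves all degrees. A path from `v1` to `v2` avoiding `u1` and `u2` uses no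
deleted edge, so it survives the switch and closes up with the new edge `v1v2` into a cycle
through `v1` that misses `u1`. When all degrees are at most `2`, a cycle through a vertex is its
whole connected component, so `u1` and `v1` are separated. Finally, the only edges of the
component of `u1` that the switch removes, `u1v1` and `u2v2`, join vertices which already lie
in the new components of `u1` and `v1`.
-/

open SimpleGraph Finset
open scoped Classical

/-- The result of the two-switch on the edges `{u1,v1}` and `{u2,v2}` of `G`:
these two edges are deleted and the edges `{u1,u2}` and `{v1,v2}` are inserted. -/
def twoSwitch {V : Type*} (G : SimpleGraph V) (u1 v1 u2 v2 : V) : SimpleGraph V :=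
  SimpleGraph.fromEdgeSet ((G.edgeSet \ {s(u1, v1), s(u2, v2)}) ∪ {s(u1, u2), s(v1, v2)})

namespace SimpleGraph

variable {V : Type*} {G : SimpleGraph V}

theorem Reachable.mem_of_adj_closed {S : Set V} (hS : ∀ ⦃a b⦄, a ∈ S → G.Adj a b → b ∈ S)
    {x y : V} (hx : x ∈ S) (h : G.Reachable x y) : y ∈ S := by
  obtain ⟨w⟩ := h
  induction w with
  | nil => exact hx
  | cons hab _ ih => exact ih (hS hx hab)

theorem Reachable.exists_isPath_of_induce {S : Set V} {a b : S}
    (h : (G.induce S).Reachable a b) : ∃ p : G.Walk a b, p.IsPath ∧ ∀ v ∈ p.support, v ∈ S := by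
  obtain ⟨w⟩ := h
  let f := (Embedding.induce (G := G) S).toHom
  have hS : ∀ v ∈ (w.bypass.map f).support, v ∈ S := by
    simp only [Walk.support_map, List.mem_map]
    rintro _ ⟨z, -, rfl⟩
    exact z.2
  exact ⟨_, w.bypass_isPath.map (f := f) Subtype.val_injective, hS⟩

variable [Fintype V]

theorem Walk.IsCycle.mem_support_of_adj (hdeg : ∀ v, G.degree v ≤ 2) {u : V}
    {c : G.Walk u u} (hc : c.IsCycle) {x y : V} (hx : x ∈ c.support) (hxy : G.Adj x y) :
    y ∈ c.support := by
  -- the cycle already uses two edges at `x`, hence all of them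
  have hcard : (G.neighborSet x).ncard ≤ (c.toSubgraph.neighborSet x).ncard := by
    rw [hc.ncard_neighborSet_toSubgraph_eq_two hx, Set.ncard_eq_toFinset_card',
      Set.toFinset_card, card_neighborSet_eq_degree]
    exact hdeg x
  have hnbr := Set.eq_of_subset_of_ncard_le (c.toSubgraph.neighborSet_subset x) hcard
  rw [← c.mem_verts_toSubgraph]
  exact ((c.toSubgraph.mem_neighborSet x y).mp (hnbr ▸ hxy)).snd_mem

theorem Walk.IsCycle.mem_support_of_reachable (hdeg : ∀ v, G.degree v ≤ 2) {u : V}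
    {c : G.Walk u u} (hc : c.IsCycle) {x y : V} (hx : x ∈ c.support) (h : G.Reachable x y) :
    y ∈ c.support :=
  h.mem_of_adj_closed (fun _ _ ha hab => hc.mem_support_of_adj hdeg ha hab) hx

end SimpleGraph

section TwoSwitch

variable {V : Type*} {G : SimpleGraph V} {u1 v1 u2 v2 : V}

theorem twoSwitch_comm (G : SimpleGraph V) (u1 v1 u2 v2 : V) :
    twoSwitch G u1 v1 u2 v2 = twoSwitch G u2 v2 u1 v1 := by
  rw [twoSwitch, twoSwitch, Set.pair_comm s(u1, v1), Sym2.eq_swap (a := u1) (b := u2),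
    Sym2.eq_swap (a := v1) (b := v2)]

theorem twoSwitch_swap (G : SimpleGraph V) (u1 v1 u2 v2 : V) :
    twoSwitch G u1 v1 u2 v2 = twoSwitch G v1 u1 v2 u2 := by
  rw [twoSwitch, twoSwitch, Sym2.eq_swap (a := u1) (b := v1), Sym2.eq_swap (a := u2) (b := v2),
    Set.pair_comm s(u1, u2)]

theorem twoSwitch_adj {a b : V} :
    (twoSwitch G u1 v1 u2 v2).Adj a b ↔
      ((G.Adj a b ∧ ¬(s(a, b) = s(u1, v1) ∨ s(a, b) = s(u2, v2))) ∨
        s(a, b) = s(u1, u2) ∨ s(a, b) = s(v1, v2)) ∧ a ≠ b := by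
  simp only [twoSwitch, fromEdgeSet_adj, Set.mem_union, Set.mem_sdiff, Set.mem_insert_iff,
    Set.mem_singleton_iff, mem_edgeSet]

theorem mem_edgeSet_twoSwitch {e : Sym2 V} (he : e ∈ G.edgeSet) (h1 : e ≠ s(u1, v1))
    (h2 : e ≠ s(u2, v2)) : e ∈ (twoSwitch G u1 v1 u2 v2).edgeSet := by
  rw [twoSwitch, edgeSet_fromEdgeSet]
  exact ⟨Or.inl ⟨he, by rintro (h | h) <;> contradiction⟩, G.not_isDiag_of_mem_edgeSet he⟩

theorem twoSwitch_adj_of_adj {a b : V} (hab : G.Adj a b) (h1 : s(a, b) ≠ s(u1, v1))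
    (h2 : s(a, b) ≠ s(u2, v2)) : (twoSwitch G u1 v1 u2 v2).Adj a b :=
  mem_edgeSet_twoSwitch hab h1 h2

theorem twoSwitch_adj_left (h : u1 ≠ u2) : (twoSwitch G u1 v1 u2 v2).Adj u1 u2 := by
  simp [twoSwitch, h]

theorem twoSwitch_adj_right (h : v1 ≠ v2) : (twoSwitch G u1 v1 u2 v2).Adj v1 v2 :=
  twoSwitch_swap G u1 v1 u2 v2 ▸ twoSwitch_adj_left h

theorem edges_subset_edgeSet_twoSwitch {a b : V} {p : G.Walk a b} (hu1 : u1 ∉ p.support)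
    (hu2 : u2 ∉ p.support) : ∀ e ∈ p.edges, e ∈ (twoSwitch G u1 v1 u2 v2).edgeSet :=
  fun _ he => mem_edgeSet_twoSwitch (p.edges_subset_edgeSet he)
    (by rintro rfl; exact hu1 (p.fst_mem_support_of_mem_edges he))
    (by rintro rfl; exact hu2 (p.fst_mem_support_of_mem_edges he))

theorem reachable_twoSwitch_of_reachable (hu : u1 ≠ u2) (hv : v1 ≠ v2) {x : V}
    (hx : G.Reachable u1 x) :
    (twoSwitch G u1 v1 u2 v2).Reachable u1 x ∨ (twoSwitch G u1 v1 u2 v2).Reachable v1 x := by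
  refine hx.mem_of_adj_closed (S := {z | _ ∨ _}) (fun a b ha hab => ?_) (Or.inl .rfl)
  by_cases he1 : s(a, b) = s(u1, v1)
  · rcases Sym2.eq_iff.mp he1 with ⟨-, rfl⟩ | ⟨-, rfl⟩
    exacts [Or.inr .rfl, Or.inl .rfl]
  by_cases he2 : s(a, b) = s(u2, v2)
  · rcases Sym2.eq_iff.mp he2 with ⟨-, rfl⟩ | ⟨-, rfl⟩
    exacts [Or.inr (twoSwitch_adj_right hv).reachable, Or.inl (twoSwitch_adj_left hu).reachable]
  have hab' := twoSwitch_adj_of_adj hab he1 he2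
  exact ha.imp (·.trans hab'.reachable) (·.trans hab'.reachable)

variable [Fintype V]

theorem neighborFinset_twoSwitch_left (h1 : G.Adj u1 v1) (h2 : G.Adj u2 v2) (hu : u1 ≠ u2)
    (hnu : ¬ G.Adj u1 u2) :
    (twoSwitch G u1 v1 u2 v2).neighborFinset u1 = insert u2 ((G.neighborFinset u1).erase v1) := by
  have hv1 : u1 ≠ v1 := h1.ne
  have hv2 : u1 ≠ v2 := fun h => hnu (h ▸ h2.symm)
  ext b
  simp only [mem_neighborFinset, twoSwitch_adj, mem_insert, mem_erase, Sym2.eq_iff]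
  grind [G.irrefl]

theorem degree_twoSwitch_left (h1 : G.Adj u1 v1) (h2 : G.Adj u2 v2) (hu : u1 ≠ u2)
    (hnu : ¬ G.Adj u1 u2) : (twoSwitch G u1 v1 u2 v2).degree u1 = G.degree u1 := by
  rw [← card_neighborFinset_eq_degree, neighborFinset_twoSwitch_left h1 h2 hu hnu,
    card_insert_of_notMem (by simp [hnu]), card_erase_add_one (by simpa using h1),
    card_neighborFinset_eq_degree]

theorem neighborFinset_twoSwitch_of_ne {v : V} (hu1 : v ≠ u1) (hv1 : v ≠ v1) (hu2 : v ≠ u2)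
    (hv2 : v ≠ v2) : (twoSwitch G u1 v1 u2 v2).neighborFinset v = G.neighborFinset v := by
  ext b
  simp only [mem_neighborFinset, twoSwitch_adj, Sym2.eq_iff]
  grind [Adj.ne]

theorem degree_twoSwitch (h1 : G.Adj u1 v1) (h2 : G.Adj u2 v2) (hu : u1 ≠ u2) (hv : v1 ≠ v2)
    (hnu : ¬ G.Adj u1 u2) (hnv : ¬ G.Adj v1 v2) (v : V) :
    (twoSwitch G u1 v1 u2 v2).degree v = G.degree v := by
  by_cases hvu1 : v = u1
  · rw [hvu1]
    exact degree_twoSwitch_left h1 h2 hu hnu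
  by_cases hvv1 : v = v1
  · rw [twoSwitch_swap, hvv1]
    exact degree_twoSwitch_left h1.symm h2.symm hv hnv
  by_cases hvu2 : v = u2
  · rw [twoSwitch_comm, hvu2]
    exact degree_twoSwitch_left h2 h1 hu.symm (fun h => hnu h.symm)
  by_cases hvv2 : v = v2
  · rw [twoSwitch_comm, twoSwitch_swap, hvv2]
    exact degree_twoSwitch_left h2.symm h1.symm hv.symm (fun h => hnv h.symm)
  rw [← card_neighborFinset_eq_degree, neighborFinset_twoSwitch_of_ne hvu1 hvv1 hvu2 hvv2,
    card_neighborFinset_eq_degree]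

theorem not_reachable_twoSwitch (hdeg : ∀ v, (twoSwitch G u1 v1 u2 v2).degree v ≤ 2)
    (hv : v1 ≠ v2) (hnv : ¬ G.Adj v1 v2) {p : G.Walk v1 v2} (hp : p.IsPath)
    (hu1 : u1 ∉ p.support) (hu2 : u2 ∉ p.support) :
    ¬ (twoSwitch G u1 v1 u2 v2).Reachable v1 u1 := by
  set q := p.transfer _ (edges_subset_edgeSet_twoSwitch hu1 hu2)
  have hc : (Walk.cons (twoSwitch_adj_right hv) q.reverse).IsCycle := by
    refine (Walk.cons_isCycle_iff _ _).mpr ⟨(hp.transfer _).reverse, ?_⟩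
    rw [Walk.edges_reverse, List.mem_reverse, Walk.edges_transfer]
    exact fun h => hnv (p.edges_subset_edgeSet h)
  intro hr
  have hmem := hc.mem_support_of_reachable hdeg (Walk.start_mem_support _) hr
  simp only [q, Walk.support_cons, Walk.support_reverse, Walk.support_transfer, List.mem_cons,
    List.mem_reverse] at hmem
  rcases hmem with rfl | h
  exacts [hu1 p.start_mem_support, hu1 h]

end TwoSwitch

theorem stmt_6_general {V : Type*} [Fintype V] (G : SimpleGraph V)
    (hdeg : ∀ v : V, G.degree v = 2)
    (u1 v1 u2 v2 : V)
    (h1 : G.Adj u1 v1) (h2 : G.Adj u2 v2)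
    (hd12 : u1 ≠ v1) (hd13 : u1 ≠ u2) (hd14 : u1 ≠ v2)
    (hd23 : v1 ≠ u2) (hd24 : v1 ≠ v2) (hd34 : u2 ≠ v2)
    (hnu : ¬ G.Adj u1 u2) (hnv : ¬ G.Adj v1 v2)
    (hsame : ∀ (hv1 : v1 ∈ ({u1, u2}ᶜ : Set V)) (hv2 : v2 ∈ ({u1, u2}ᶜ : Set V)),
      (G.induce ({u1, u2}ᶜ : Set V)).Reachable ⟨v1, hv1⟩ ⟨v2, hv2⟩) :
    (∀ v : V, (twoSwitch G u1 v1 u2 v2).degree v = 2) ∧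
    ¬ (twoSwitch G u1 v1 u2 v2).Reachable u1 v1 ∧
    (twoSwitch G u1 v1 u2 v2).Reachable u1 u2 ∧
    (twoSwitch G u1 v1 u2 v2).Reachable v1 v2 ∧
    ∀ x : V, G.Reachable u1 x →
      ((twoSwitch G u1 v1 u2 v2).Reachable u1 x ∨ (twoSwitch G u1 v1 u2 v2).Reachable v1 x) := by
  have hdeg' (v : V) : (twoSwitch G u1 v1 u2 v2).degree v = 2 :=
    (degree_twoSwitch h1 h2 hd13 hd24 hnu hnv v).trans (hdeg v)
  obtain ⟨p, hp, hpS⟩ := (hsame (by simp [hd12.symm, hd23]) (by simp [hd14.symm, hd34.symm]))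
    |>.exists_isPath_of_induce
  have hu1 : u1 ∉ p.support := fun h => hpS u1 h (by simp)
  have hu2 : u2 ∉ p.support := fun h => hpS u2 h (by simp)
  exact ⟨hdeg', fun hr => not_reachable_twoSwitch (hdeg' · |>.le) hd24 hnv hp hu1 hu2 hr.symm,
    (twoSwitch_adj_left hd13).reachable, (twoSwitch_adj_right hd24).reachable,
    fun _ => reachable_twoSwitch_of_reachable hd13 hd24⟩

/-- a two-switch on edges of the same cycle whose endpoints `v1, v2` lie on
the same path from `u1` to `u2` breaks the cycle into two cycles, one containing
`u1, u2` and the other containing `v1, v2`. -/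
theorem stmt_6 {V : Type*} [Fintype V] (G : SimpleGraph V)
    (hdeg : ∀ v : V, G.degree v = 2)
    (u1 v1 u2 v2 : V)
    (h1 : G.Adj u1 v1) (h2 : G.Adj u2 v2)
    (hd12 : u1 ≠ v1) (hd13 : u1 ≠ u2) (hd14 : u1 ≠ v2)
    (hd23 : v1 ≠ u2) (hd24 : v1 ≠ v2) (hd34 : u2 ≠ v2)
    (hnu : ¬ G.Adj u1 u2) (hnv : ¬ G.Adj v1 v2)
    (hcomp : G.Reachable u1 u2)
    (hsame : ∀ (hv1 : v1 ∈ ({u1, u2}ᶜ : Set V)) (hv2 : v2 ∈ ({u1, u2}ᶜ : Set V)),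
      (G.induce ({u1, u2}ᶜ : Set V)).Reachable ⟨v1, hv1⟩ ⟨v2, hv2⟩) :
    (∀ v : V, (twoSwitch G u1 v1 u2 v2).degree v = 2) ∧
    ¬ (twoSwitch G u1 v1 u2 v2).Reachable u1 v1 ∧
    (twoSwitch G u1 v1 u2 v2).Reachable u1 u2 ∧
    (twoSwitch G u1 v1 u2 v2).Reachable v1 v2 ∧
    ∀ x : V, G.Reachable u1 x →
      ((twoSwitch G u1 v1 u2 v2).Reachable u1 x ∨ (twoSwitch G u1 v1 u2 v2).Reachable v1 x) :=
  stmt_6_general G hdeg u1 v1 u2 v2 h1 h2 hd12 hd13 hd14 hd23 hd24 hd34 hnu hnv hsame
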